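/- Let ψ : ℝ → ℂ² be twice differentiable and a γ₊-eigenstate of the harmonic Lévy-Leblond Hamiltonian with γ₊-eigenvalue E, i.e. (H_LL ψ)(x) = E γ₊ ψ(x) for all x. Then bψ is a γ₊-eigenstate with γ₊-eigenvalue E − ω: (H_LL(bψ))(x) = (E − ω) γ₊ (bψ)(x) for all x ∈ ℝ. (This follows from the commutation relation [H_LL, b] = −ω γ₊ b together with [γ₊, b] = 0.) -/

import Mathlib

open Matrix

noncomputable section

/-- The gamma matrix `γ¹ = [[1,0],[0,−1]]`. -/
def γ1 : Matrix (Fin 2) (Fin 2) ℂ := !![1, 0; 0, -1]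

/-- The gamma matrix `γ₊ = [[0,1],[0,0]]`. -/
def γp : Matrix (Fin 2) (Fin 2) ℂ := !![0, 1; 0, 0]

/-- The gamma matrix `γ₋ = [[0,0],[1,0]]`. -/
def γm : Matrix (Fin 2) (Fin 2) ℂ := !![0, 0; 1, 0]

/-- The harmonic Lévy-Leblond Hamiltonian:
`(H_LL ψ)(x) = β γ₋ ψ(x) − i γ¹ ψ′(x) + (k/2) x² γ₊ ψ(x)`. -/
def HLL (β k : ℝ) (ψ : ℝ → (Fin 2 → ℂ)) : ℝ → (Fin 2 → ℂ) :=
  fun x => (β : ℂ) • γm.mulVec (ψ x) - Complex.I • γ1.mulVec (deriv ψ x)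
    + ((k / 2 * x ^ 2 : ℝ) : ℂ) • γp.mulVec (ψ x)

/-- The lowering operator:
`(bψ)(x) = √(βk/2)·x·ψ(x) + ψ′(x) − i√(k/(2β)) γ₊ ψ(x)`. -/
def lower (β k : ℝ) (ψ : ℝ → (Fin 2 → ℂ)) : ℝ → (Fin 2 → ℂ) :=
  fun x => ((Real.sqrt (β * k / 2) * x : ℝ) : ℂ) • ψ x + deriv ψ x
    - (Complex.I * ((Real.sqrt (k / (2 * β)) : ℝ) : ℂ)) • γp.mulVec (ψ x)

/-- The raising operator:
`(b†ψ)(x) = √(βk/2)·x·ψ(x) − ψ′(x) − i√(k/(2β)) γ₊ ψ(x)`. -/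
def raise (β k : ℝ) (ψ : ℝ → (Fin 2 → ℂ)) : ℝ → (Fin 2 → ℂ) :=
  fun x => ((Real.sqrt (β * k / 2) * x : ℝ) : ℂ) • ψ x - deriv ψ x
    - (Complex.I * ((Real.sqrt (k / (2 * β)) : ℝ) : ℂ)) • γp.mulVec (ψ x)

/-!
On twice-differentiable functions the commutator `[H_LL, b]` equals `-ω γ₊ b`: after the
derivative terms cancel, what remains is governed by `γ₊γ₋ - γ₋γ₊ = γ¹`, `γ¹γ₊ = -γ₊γ¹ = γ₊`,
`γ₊² = 0` and `√(βk/2) · √(k/(2β)) = k/2`. Since `b` also commutes with `γ₊`, the eigen-equation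
`H_LL ψ = E γ₊ ψ` gives `H_LL (bψ) = b (E γ₊ ψ) - ω γ₊ bψ = (E - ω) γ₊ bψ`.
-/

theorem HasDerivAt.matrix_mulVec {𝕜 n : Type*} [RCLike 𝕜] [Fintype n] {f : ℝ → n → 𝕜}
    {f' : n → 𝕜} {x : ℝ} (A : Matrix n n 𝕜) (hf : HasDerivAt f f' x) :
    HasDerivAt (fun t => A *ᵥ f t) (A *ᵥ f') x :=
  ((Matrix.mulVecLin A).restrictScalars ℝ).toContinuousLinearMap.hasFDerivAt.comp_hasDerivAt x hf

theorem γ1_mulVec (v : Fin 2 → ℂ) : γ1 *ᵥ v = ![v 0, -v 1] := by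
  ext i; fin_cases i <;> simp [γ1, Matrix.mulVec, dotProduct, Fin.sum_univ_two]

theorem γp_mulVec (v : Fin 2 → ℂ) : γp *ᵥ v = ![v 1, 0] := by
  ext i; fin_cases i <;> simp [γp, Matrix.mulVec, dotProduct, Fin.sum_univ_two]

theorem γm_mulVec (v : Fin 2 → ℂ) : γm *ᵥ v = ![0, v 0] := by
  ext i; fin_cases i <;> simp [γm, Matrix.mulVec, dotProduct, Fin.sum_univ_two]

theorem γp_mulVec_γp_mulVec (v : Fin 2 → ℂ) : γp *ᵥ (γp *ᵥ v) = 0 := by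
  rw [γp_mulVec, γp_mulVec]
  simp

theorem mul_sqrt_div_two_mul {β : ℝ} (hβ : 0 ≤ β) (k : ℝ) :
    β * √(k / (2 * β)) = √(β * k / 2) := by
  obtain rfl | hβ := hβ.eq_or_lt
  · simp
  rw [show β * k / 2 = β ^ 2 * (k / (2 * β)) by field_simp, Real.sqrt_mul (sq_nonneg β),
    Real.sqrt_sq hβ.le]

theorem sqrt_two_mul_div (k β : ℝ) : √(2 * k / β) = 2 * √(k / (2 * β)) := by
  rw [show 2 * k / β = 2 ^ 2 * (k / (2 * β)) by ring, Real.sqrt_mul (by norm_num),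
    Real.sqrt_sq (by norm_num)]

theorem sqrt_mul_div_two_mul_sqrt_div_two_mul {β k : ℝ} (hβ : 0 < β) (hk : 0 ≤ k) :
    √(β * k / 2) * √(k / (2 * β)) = k / 2 := by
  rw [← Real.sqrt_mul (by positivity), show β * k / 2 * (k / (2 * β)) = (k / 2) ^ 2 by field_simp,
    Real.sqrt_sq (by positivity)]

section HarmonicLevyLeblond

variable {ψ : ℝ → Fin 2 → ℂ} {x : ℝ}

theorem hasDerivAt_lower (β k : ℝ) {ψ'' : Fin 2 → ℂ} (hψ : DifferentiableAt ℝ ψ x)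
    (hψ' : HasDerivAt (deriv ψ) ψ'' x) :
    HasDerivAt (lower β k ψ)
      (((√(β * k / 2) * x : ℝ) : ℂ) • deriv ψ x + ((√(β * k / 2) : ℝ) : ℂ) • ψ x + ψ''
        - (Complex.I * ((√(k / (2 * β)) : ℝ) : ℂ)) • γp *ᵥ deriv ψ x) x := by
  have hlin :
      HasDerivAt (fun t : ℝ => ((√(β * k / 2) * t : ℝ) : ℂ)) ((√(β * k / 2) : ℝ) : ℂ) x := by
    simpa using ((hasDerivAt_id x).const_mul (√(β * k / 2))).ofReal_comp
  exact ((hlin.fun_smul hψ.hasDerivAt).fun_add hψ').fun_sub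
    ((hψ.hasDerivAt.matrix_mulVec γp).fun_const_smul _)

theorem hasDerivAt_HLL (β k : ℝ) {ψ'' : Fin 2 → ℂ} (hψ : DifferentiableAt ℝ ψ x)
    (hψ' : HasDerivAt (deriv ψ) ψ'' x) :
    HasDerivAt (HLL β k ψ)
      ((β : ℂ) • γm *ᵥ deriv ψ x - Complex.I • γ1 *ᵥ ψ''
        + (((k / 2 * x ^ 2 : ℝ) : ℂ) • γp *ᵥ deriv ψ x + ((k * x : ℝ) : ℂ) • γp *ᵥ ψ x)) x := by
  have hquad : HasDerivAt (fun t : ℝ => ((k / 2 * t ^ 2 : ℝ) : ℂ)) ((k * x : ℝ) : ℂ) x := by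
    convert ((hasDerivAt_pow 2 x).const_mul (k / 2)).ofReal_comp using 2
    ring
  exact (((hψ.hasDerivAt.matrix_mulVec γm).fun_const_smul _).fun_sub
    ((hψ'.matrix_mulVec γ1).fun_const_smul _)).fun_add
    (hquad.fun_smul (hψ.hasDerivAt.matrix_mulVec γp))

theorem lower_smul_γp_mulVec (β k : ℝ) (c : ℂ) (hψ : DifferentiableAt ℝ ψ x) :
    lower β k (fun t => c • γp *ᵥ ψ t) x = c • γp *ᵥ lower β k ψ x := by
  have hd : deriv (fun t => c • γp *ᵥ ψ t) x = c • γp *ᵥ deriv ψ x :=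
    ((hψ.hasDerivAt.matrix_mulVec γp).fun_const_smul c).deriv
  simp only [lower, hd, Matrix.mulVec_smul, Matrix.mulVec_add, Matrix.mulVec_sub,
    γp_mulVec_γp_mulVec, smul_zero]
  module

theorem HLL_lower_sub_lower_HLL {β k : ℝ} (hβ : 0 < β) (hk : 0 ≤ k)
    (hψ : DifferentiableAt ℝ ψ x) (hψ' : DifferentiableAt ℝ (deriv ψ) x) :
    HLL β k (lower β k ψ) x - lower β k (HLL β k ψ) x
      = -((√(2 * k / β) : ℝ) : ℂ) • γp *ᵥ lower β k ψ x := by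
  have hdL := (hasDerivAt_lower β k hψ hψ'.hasDerivAt).deriv
  have hdH := (hasDerivAt_HLL β k hψ hψ'.hasDerivAt).deriv
  -- unfolding `hdL` and `hdH` as well keeps their left-hand sides matching the goal
  simp only [HLL, lower] at hdL hdH ⊢
  rw [hdL, hdH, sqrt_two_mul_div]
  have hβc := mul_sqrt_div_two_mul hβ.le k
  have hac := sqrt_mul_div_two_mul_sqrt_div_two_mul hβ hk
  generalize √(β * k / 2) = a at *
  generalize √(k / (2 * β)) = c at *
  have hβc' : (β : ℂ) * c = a := by exact_mod_cast hβc
  have hac' : (a : ℂ) * c = k / 2 := by exact_mod_cast hac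
  ext i; fin_cases i <;> simp only [γ1_mulVec, γp_mulVec, γm_mulVec, Pi.add_apply, Pi.sub_apply,
    Pi.smul_apply, smul_eq_mul, Fin.zero_eta, Fin.mk_one, Matrix.cons_val_zero,
    Matrix.cons_val_one] <;> push_cast
  · linear_combination (Complex.I * ψ x 0) * hβc' + (2 * c * deriv ψ x 1) * Complex.I_sq
      + (2 * x * ψ x 1) * hac'
  · linear_combination (-Complex.I * ψ x 1) * hβc'

end HarmonicLevyLeblond

/-- If `ψ` is a twice-differentiable `γ₊`-eigenstate of the harmonic
Lévy-Leblond Hamiltonian with `γ₊`-eigenvalue `E`, then `bψ` is a `γ₊`-eigenstate with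
`γ₊`-eigenvalue `E − ω`, where `ω = √(2k/β)`. -/
theorem lower_eigenstate (β k : ℝ) (hβ : 0 < β) (hk : 0 < k) (E : ℂ)
    (ψ : ℝ → (Fin 2 → ℂ))
    (hψ1 : Differentiable ℝ ψ) (hψ2 : Differentiable ℝ (deriv ψ))
    (heig : ∀ x : ℝ, HLL β k ψ x = E • γp.mulVec (ψ x)) :
    ∀ x : ℝ, HLL β k (lower β k ψ) x
      = (E - ((Real.sqrt (2 * k / β) : ℝ) : ℂ)) • γp.mulVec (lower β k ψ x) := by
  intro x
  have hHψ : HLL β k ψ = fun t => E • γp *ᵥ ψ t := funext heig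
  have hcomm := HLL_lower_sub_lower_HLL hβ hk.le (hψ1 x) (hψ2 x)
  rw [hHψ, lower_smul_γp_mulVec β k E (hψ1 x), sub_eq_iff_eq_add] at hcomm
  rw [hcomm, sub_smul, neg_smul, neg_add_eq_sub]

end
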